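/- Let m ≥ 0, let k ∈ ℂ with 0 < |k| < 1, and let λ ∈ ℂ satisfy λ² = m² + 2 − k − k⁻¹ (so that λ² ≠ m² and λ² ≠ m² + 4). Set B := ( |λ + m|² + |λ − m|² + 2|k| |λ² − m²| ) / ( |λ² − m²| · |λ² − m² − 4| ) and C := |k| / |λ² − m² − 4|. Then the squared spectral norm of T₀(k) is given exactly by |T₀(k)|² = (B + √(B² − 4C))/2. -/

import Mathlib

open scoped ComplexOrder
open Matrix

noncomputable section

abbrev Mat2 : Type := Matrix (Fin 2) (Fin 2) ℂ
abbrev Vec2 : Type := EuclideanSpace ℂ (Fin 2)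
abbrev Hsp : Type := lp (fun _ : ℤ => Vec2) 2

/-- A `2×2` complex matrix acting on `ℂ²` as a continuous linear map. -/
def mAct (A : Mat2) : Vec2 →L[ℂ] Vec2 := Matrix.toEuclideanCLM (𝕜 := ℂ) A

/-- The spectral (operator) norm of a `2×2` complex matrix. -/
def specNorm (A : Mat2) : ℝ := ‖mAct A‖

/-- The Hilbert–Schmidt (Frobenius) norm of a `2×2` complex matrix. -/
def hsNorm (A : Mat2) : ℝ := Real.sqrt (∑ i, ∑ j, ‖A i j‖ ^ 2)

def bMat (m : ℝ) : Mat2 := !![(-m : ℂ), 1; 1, (m : ℂ)]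

def aMat : Mat2 := !![0, 0; -1, 0]

/-- `D0` is the free discrete Dirac operator with mass `m`. -/
def IsFreeDirac (m : ℝ) (D0 : Hsp →L[ℂ] Hsp) : Prop :=
  ∀ u : Hsp, ∀ n : ℤ,
    (D0 u) n = mAct aMat.transpose (u (n - 1)) + mAct (bMat m) (u n) + mAct aMat (u (n + 1))

/-- `Vop` is the block-diagonal operator with blocks `υ n`. -/
def IsBlockDiagOp (υ : ℤ → Mat2) (Vop : Hsp →L[ℂ] Hsp) : Prop :=
  ∀ u : Hsp, ∀ n : ℤ, (Vop u) n = mAct (υ n) (u n)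

/-- The spectrum `[−√(m²+4), −m] ∪ [m, √(m²+4)]` as a subset of `ℂ`. -/
def sigma0 (m : ℝ) : Set ℂ :=
  Complex.ofReal '' (Set.Icc (-Real.sqrt (m ^ 2 + 4)) (-m) ∪ Set.Icc m (Real.sqrt (m ^ 2 + 4)))

def T0mat (m : ℝ) (lam k : ℂ) : Mat2 :=
  (k⁻¹ - k)⁻¹ • !![lam - m, 1 - k; 1 - k, lam + m]

def T1mat (m : ℝ) (lam k : ℂ) : Mat2 :=
  (k * (k⁻¹ - k)⁻¹) • !![lam - m, 1 - k; 1 - k⁻¹, lam + m]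

def Tmat (m : ℝ) (lam k : ℂ) : ℤ → Mat2 := fun j =>
  if j = 0 then T0mat m lam k
  else if 0 < j then k ^ (j.toNat - 1) • T1mat m lam k
  else (k ^ ((-j).toNat - 1) • T1mat m lam k).transpose

open scoped MatrixOrder

def wMat (υ : ℤ → Mat2) (n : ℤ) : Mat2 :=
  CFC.sqrt ((υ n)ᴴ * υ n)

def sqrtwMat (υ : ℤ → Mat2) (n : ℤ) : Mat2 :=
  CFC.sqrt (CFC.sqrt ((υ n)ᴴ * υ n))

/-- The Birman–Schwinger operator `K(z) = √W (D₀ − z)⁻¹ U √W`. -/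
def Kop (D0 sW Uop : Hsp →L[ℂ] Hsp) (z : ℂ) : Hsp →L[ℂ] Hsp :=
  sW * Ring.inverse (D0 - z • (1 : Hsp →L[ℂ] Hsp)) * Uop * sW

/-- The element of `ℓ²(ℤ, ℂ²)` supported at site `j` equal to the `β`-th standard basis vector. -/
def deltaVec (j : ℤ) (β : Fin 2) : Hsp := lp.single 2 j (EuclideanSpace.single β (1 : ℂ))

/-! For any `2×2` matrix `A`, `‖A‖²` is the larger eigenvalue of `Aᴴ A`, a positive semidefinite
matrix with trace `‖A‖_F²` and determinant `|det A|²`; solving the characteristic quadratic gives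
`‖A‖² = (‖A‖_F² + √(‖A‖_F⁴ - 4 |det A|²)) / 2`. The relation between `λ` and `k` gives
`λ² - m² = -(1 - k)²/k` and `λ² - m² - 4 = -(1 + k)²/k`, which turn `‖T₀(k)‖_F²` into `B` and
`|det T₀(k)|² = |k / (1 + k)|²` into `C`. -/

theorem IsSelfAdjoint.norm_eq_max_of_spectrum_eq_pair {A : Type*} [CStarAlgebra A] {a : A}
    (ha : IsSelfAdjoint a) {x y : ℂ} (h : spectrum ℂ a = {x, y}) : ‖a‖ = max ‖x‖ ‖y‖ := by
  have h2 := ha.spectralRadius_eq_nnnorm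
  rw [spectralRadius, h, iSup_pair, ← ENNReal.coe_max, ENNReal.coe_inj] at h2
  rw [← coe_nnnorm, ← h2, NNReal.coe_max, coe_nnnorm, coe_nnnorm]

namespace Matrix

theorem spectrum_fin_two_eq_pair {H : Matrix (Fin 2) (Fin 2) ℂ} {a b : ℂ}
    (hsum : a + b = H.trace) (hprod : a * b = H.det) : spectrum ℂ H = {a, b} := by
  ext z
  have hfac : z ^ 2 - H.trace * z + H.det = (z - a) * (z - b) := by
    rw [← hsum, ← hprod]; ring
  simp only [mem_spectrum_iff_isRoot_charpoly, charpoly_fin_two, Polynomial.IsRoot.def,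
    Polynomial.eval_add, Polynomial.eval_sub, Polynomial.eval_pow, Polynomial.eval_mul,
    Polynomial.eval_X, Polynomial.eval_C, hfac, mul_eq_zero, sub_eq_zero, Set.mem_insert_iff,
    Set.mem_singleton_iff]

theorem trace_conjTranspose_mul_self {m n : Type*} [Fintype m] [Fintype n] (A : Matrix m n ℂ) :
    (Aᴴ * A).trace = ((∑ i, ∑ j, ‖A i j‖ ^ 2 : ℝ) : ℂ) := by
  simp only [trace, diag, mul_apply, conjTranspose_apply, Complex.ofReal_sum]
  rw [Finset.sum_comm]
  refine Finset.sum_congr rfl fun i _ => Finset.sum_congr rfl fun j _ => ?_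
  rw [RCLike.star_def, mul_comm, Complex.mul_conj, Complex.normSq_eq_norm_sq]

theorem det_conjTranspose_mul_self {n : Type*} [Fintype n] [DecidableEq n] (A : Matrix n n ℂ) :
    (Aᴴ * A).det = ((‖A.det‖ ^ 2 : ℝ) : ℂ) := by
  rw [det_mul, det_conjTranspose, RCLike.star_def, mul_comm, Complex.mul_conj,
    Complex.normSq_eq_norm_sq]

theorem two_mul_norm_det_le_sum_norm_sq (A : Matrix (Fin 2) (Fin 2) ℂ) :
    2 * ‖A.det‖ ≤ ∑ i, ∑ j, ‖A i j‖ ^ 2 := by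
  have hdet : ‖A.det‖ ≤ ‖A 0 0‖ * ‖A 1 1‖ + ‖A 0 1‖ * ‖A 1 0‖ := by
    rw [det_fin_two, ← norm_mul, ← norm_mul]; exact norm_sub_le _ _
  simp only [Fin.sum_univ_two]
  nlinarith [sq_nonneg (‖A 0 0‖ - ‖A 1 1‖), sq_nonneg (‖A 0 1‖ - ‖A 1 0‖)]

end Matrix

open scoped Matrix.Norms.L2Operator in
theorem specNorm_sq_eq (A : Mat2) :
    specNorm A ^ 2 = (hsNorm A ^ 2 + √((hsNorm A ^ 2) ^ 2 - 4 * ‖A.det‖ ^ 2)) / 2 := by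
  set τ := hsNorm A ^ 2
  have hτ : τ = ∑ i, ∑ j, ‖A i j‖ ^ 2 := Real.sq_sqrt (by positivity)
  have hdisc : 0 ≤ τ ^ 2 - 4 * ‖A.det‖ ^ 2 := by
    nlinarith [hτ ▸ A.two_mul_norm_det_le_sum_norm_sq, norm_nonneg A.det]
  set D := √(τ ^ 2 - 4 * ‖A.det‖ ^ 2)
  have hD : D ^ 2 = τ ^ 2 - 4 * ‖A.det‖ ^ 2 := Real.sq_sqrt hdisc
  have hD0 : 0 ≤ D := Real.sqrt_nonneg _
  have hDτ : D ≤ τ := by nlinarith [sq_nonneg (hsNorm A)]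
  have hspec : spectrum ℂ (star A * A) = {(((τ - D) / 2 : ℝ) : ℂ), (((τ + D) / 2 : ℝ) : ℂ)} :=
    Matrix.spectrum_fin_two_eq_pair
      (by
        rw [Matrix.star_eq_conjTranspose, Matrix.trace_conjTranspose_mul_self, ← hτ]
        push_cast; ring)
      (by
        rw [Matrix.star_eq_conjTranspose, Matrix.det_conjTranspose_mul_self]
        have hprod : (τ - D) / 2 * ((τ + D) / 2) = ‖A.det‖ ^ 2 := by
          linear_combination (-1 / 4 : ℝ) * hD
        exact_mod_cast hprod)
  calc specNorm A ^ 2 = ‖star A * A‖ := by rw [sq, CStarRing.norm_star_mul_self]; rfl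
    _ = (τ + D) / 2 := by
      rw [(IsSelfAdjoint.star_mul_self A).norm_eq_max_of_spectrum_eq_pair hspec,
        Complex.norm_real, Complex.norm_real, Real.norm_of_nonneg (by linarith),
        Real.norm_of_nonneg (by linarith), max_eq_right (by linarith)]

theorem inv_inv_sub_self {K : Type*} [Field K] {k : K} (hk : k ≠ 0) :
    (k⁻¹ - k)⁻¹ = k / ((1 - k) * (1 + k)) := by
  rw [show k⁻¹ - k = (1 - k) * (1 + k) / k by field_simp; ring, inv_div]

theorem hsNorm_T0mat_sq (m : ℝ) (lam k : ℂ) :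
    hsNorm (T0mat m lam k) ^ 2 =
      ‖(k⁻¹ - k)⁻¹‖ ^ 2 * (‖lam - m‖ ^ 2 + 2 * ‖1 - k‖ ^ 2 + ‖lam + m‖ ^ 2) := by
  rw [hsNorm, Real.sq_sqrt (by positivity)]
  simp only [T0mat, Fin.sum_univ_two, Matrix.smul_apply, Matrix.of_apply, Matrix.cons_val',
    Matrix.cons_val_zero, Matrix.cons_val_one, Matrix.empty_val', Matrix.cons_val_fin_one,
    smul_eq_mul, norm_mul, mul_pow]
  ring

section T0mat

variable {m : ℝ} {k lam : ℂ}

theorem sq_sub_sq_of_rel (hk : k ≠ 0) (hrel : lam ^ 2 = (m : ℂ) ^ 2 + 2 - k - k⁻¹) :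
    lam ^ 2 - (m : ℂ) ^ 2 = -(1 - k) ^ 2 / k := by
  rw [hrel]; field_simp; ring

theorem sq_sub_sq_sub_four_of_rel (hk : k ≠ 0) (hrel : lam ^ 2 = (m : ℂ) ^ 2 + 2 - k - k⁻¹) :
    lam ^ 2 - (m : ℂ) ^ 2 - 4 = -(1 + k) ^ 2 / k := by
  rw [hrel]; field_simp; ring

theorem det_T0mat_of_rel (hk : k ≠ 0) (hrel : lam ^ 2 = (m : ℂ) ^ 2 + 2 - k - k⁻¹)
    (h1 : 1 - k ≠ 0) (h2 : 1 + k ≠ 0) : (T0mat m lam k).det = -k / (1 + k) := by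
  have hprod : k * ((lam - m) * (lam + m)) = -(1 - k) ^ 2 := by
    rw [show (lam - m) * (lam + m) = lam ^ 2 - (m : ℂ) ^ 2 by ring, sq_sub_sq_of_rel hk hrel,
      mul_div_cancel₀ _ hk]
  simp only [T0mat, Matrix.det_fin_two, Matrix.smul_apply, Matrix.of_apply, Matrix.cons_val',
    Matrix.cons_val_zero, Matrix.cons_val_one, Matrix.empty_val', Matrix.cons_val_fin_one,
    smul_eq_mul, inv_inv_sub_self hk]
  field_simp
  linear_combination hprod

theorem hsNorm_T0mat_sq_of_rel (hk : k ≠ 0) (hrel : lam ^ 2 = (m : ℂ) ^ 2 + 2 - k - k⁻¹)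
    (h1 : 1 - k ≠ 0) (h2 : 1 + k ≠ 0) :
    hsNorm (T0mat m lam k) ^ 2 =
      (‖lam + (m : ℂ)‖ ^ 2 + ‖lam - (m : ℂ)‖ ^ 2 + 2 * ‖k‖ * ‖lam ^ 2 - (m : ℂ) ^ 2‖) /
        (‖lam ^ 2 - (m : ℂ) ^ 2‖ * ‖lam ^ 2 - (m : ℂ) ^ 2 - 4‖) := by
  rw [hsNorm_T0mat_sq, inv_inv_sub_self hk, sq_sub_sq_sub_four_of_rel hk hrel,
    sq_sub_sq_of_rel hk hrel]
  simp only [norm_div, norm_mul, norm_neg, norm_pow]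
  have : 0 < ‖k‖ := norm_pos_iff.mpr hk
  have : 0 < ‖1 - k‖ := norm_pos_iff.mpr h1
  have : 0 < ‖1 + k‖ := norm_pos_iff.mpr h2
  field_simp
  ring

theorem norm_det_T0mat_sq_of_rel (hk : k ≠ 0) (hrel : lam ^ 2 = (m : ℂ) ^ 2 + 2 - k - k⁻¹)
    (h1 : 1 - k ≠ 0) (h2 : 1 + k ≠ 0) :
    ‖(T0mat m lam k).det‖ ^ 2 = ‖k‖ / ‖lam ^ 2 - (m : ℂ) ^ 2 - 4‖ := by
  rw [det_T0mat_of_rel hk hrel h1 h2, sq_sub_sq_sub_four_of_rel hk hrel]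
  simp only [norm_div, norm_neg, norm_pow]
  have : 0 < ‖k‖ := norm_pos_iff.mpr hk
  have : 0 < ‖1 + k‖ := norm_pos_iff.mpr h2
  field_simp

end T0mat

theorem stmt10_general (m : ℝ) (k lam : ℂ)
    (hk0 : 0 < ‖k‖) (hk1 : ‖k‖ < 1)
    (hrel : lam ^ 2 = (m : ℂ) ^ 2 + 2 - k - k⁻¹)
    (B C : ℝ)
    (hB : B = (‖lam + (m : ℂ)‖ ^ 2 + ‖lam - (m : ℂ)‖ ^ 2 +
          2 * ‖k‖ * ‖lam ^ 2 - (m : ℂ) ^ 2‖) /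
        (‖lam ^ 2 - (m : ℂ) ^ 2‖ * ‖lam ^ 2 - (m : ℂ) ^ 2 - 4‖))
    (hC : C = ‖k‖ / ‖lam ^ 2 - (m : ℂ) ^ 2 - 4‖) :
    specNorm (T0mat m lam k) ^ 2 = (B + Real.sqrt (B ^ 2 - 4 * C)) / 2 := by
  have hk : k ≠ 0 := norm_pos_iff.mp hk0
  have h1 : 1 - k ≠ 0 := fun h => by simp [← sub_eq_zero.mp h] at hk1
  have h2 : 1 + k ≠ 0 := fun h => by simp [eq_neg_of_add_eq_zero_right h] at hk1
  rw [specNorm_sq_eq, hsNorm_T0mat_sq_of_rel hk hrel h1 h2,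
    norm_det_T0mat_sq_of_rel hk hrel h1 h2, hB, hC]

/-- Exact formula for the squared spectral norm of `T₀(k)`. -/
theorem stmt10 (m : ℝ) (hm : 0 ≤ m) (k lam : ℂ)
    (hk0 : 0 < ‖k‖) (hk1 : ‖k‖ < 1)
    (hrel : lam ^ 2 = (m : ℂ) ^ 2 + 2 - k - k⁻¹)
    (B C : ℝ)
    (hB : B = (‖lam + (m : ℂ)‖ ^ 2 + ‖lam - (m : ℂ)‖ ^ 2 +
          2 * ‖k‖ * ‖lam ^ 2 - (m : ℂ) ^ 2‖) /
        (‖lam ^ 2 - (m : ℂ) ^ 2‖ * ‖lam ^ 2 - (m : ℂ) ^ 2 - 4‖))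
    (hC : C = ‖k‖ / ‖lam ^ 2 - (m : ℂ) ^ 2 - 4‖) :
    specNorm (T0mat m lam k) ^ 2 = (B + Real.sqrt (B ^ 2 - 4 * C)) / 2 :=
  stmt10_general m k lam hk0 hk1 hrel B C hB hC
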